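/- arXiv:2202.01563 — 6 statements merged into one kernel-verified Lean document; each statement's English description precedes it below -/
import Mathlib

section
/- Let p, q be probability distributions on [0,1] with X ∼ p and Y ∼ q. If |E[X^m] − E[Y^m]| ≤ γ for all m ∈ {1,…,d}, then for any T > 1, ∫_0^T |ψ_q(t) − ψ_p(t)|/t dt ≤ e^T (γ + T^{d+1}/(d!·d)), where ψ_p, ψ_q are the characteristic functions of p, q. -/
/-!
Both characteristic functions are within `|t|^(d+1) e^|t| / (d+1)!` of their degree-`d` Taylor
polynomials at `0`, whose coefficients `(it)^m E[X^m] / m!` are given by the moments because the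
laws live on `[0,1]`. The two Taylor polynomials differ by at most `γ ∑_{m=1}^d t^m / m!`, so
after dividing by `t` the integrand is bounded by a polynomial in `t`; integrating it over `[0,T]`
gives `γ ∑_{m=1}^d T^m / (m!·m) + 2 e^T T^(d+1) / ((d+1)!·(d+1))`, which is at most
`γ (e^T - 1) + e^T T^(d+1) / (d!·d)`.
-/

open MeasureTheory Set Complex
open scoped Nat

theorem Real.exp_sub_sum_range_le_pow_div_factorial_mul_exp {r : ℝ} (hr : 0 ≤ r) (n : ℕ) :
    Real.exp r - ∑ m ∈ Finset.range n, r ^ m / m ! ≤ r ^ n / n ! * Real.exp r := by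
  have hexp : Real.exp r = ∑' m, r ^ m / m ! := by
    rw [Real.exp_eq_exp_ℝ, NormedSpace.exp_eq_tsum_div]
  have hsum : Summable fun m : ℕ => r ^ m / m ! := Real.summable_pow_div_factorial r
  have htail : Real.exp r - ∑ m ∈ Finset.range n, r ^ m / m ! = ∑' k, r ^ (k + n) / (k + n)! := by
    rw [hexp, ← hsum.sum_add_tsum_nat_add n, add_sub_cancel_left]
  have hterm (k : ℕ) : r ^ (k + n) / (k + n)! ≤ r ^ n / n ! * (r ^ k / k !) := by
    have hfac : (k ! * n ! : ℝ) ≤ (k + n)! := by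
      exact_mod_cast Nat.le_of_dvd (Nat.factorial_pos _)
        (Nat.factorial_mul_factorial_dvd_factorial_add k n)
    rw [div_mul_div_comm, pow_add, mul_comm (r ^ n), mul_comm (n ! : ℝ)]
    gcongr
  rw [htail, hexp, ← tsum_mul_left]
  exact ((summable_nat_add_iff n).2 hsum).tsum_le_tsum hterm (hsum.mul_left _)

theorem Complex.norm_exp_sub_sum_range_le (z : ℂ) (n : ℕ) :
    ‖exp z - ∑ m ∈ Finset.range n, (z ^ m / m !)‖ ≤ ‖z‖ ^ n / n ! * Real.exp ‖z‖ :=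
  (norm_exp_sub_sum_le_exp_norm_sub_sum z n).trans
    (Real.exp_sub_sum_range_le_pow_div_factorial_mul_exp (norm_nonneg z) n)

theorem Real.sum_range_pow_succ_div_le_exp_sub_one {T : ℝ} (hT : 0 ≤ T) (n : ℕ) :
    ∑ i ∈ Finset.range n, T ^ (i + 1) / ((i + 1)! * (i + 1)) ≤ Real.exp T - 1 := by
  calc ∑ i ∈ Finset.range n, T ^ (i + 1) / ((i + 1)! * (i + 1))
      ≤ ∑ i ∈ Finset.range n, T ^ (i + 1) / (i + 1)! := by
        gcongr with i
        exact le_mul_of_one_le_right (by positivity) (by linarith [i.cast_nonneg (α := ℝ)])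
    _ = (∑ m ∈ Finset.range (n + 1), T ^ m / m !) - 1 := by simp [Finset.sum_range_succ']
    _ ≤ Real.exp T - 1 := by gcongr; exact Real.sum_le_exp_of_nonneg hT _

theorem two_mul_pow_succ_div_factorial_succ_le {T : ℝ} (hT : 0 ≤ T) {d : ℕ} (hd : 0 < d) :
    2 * (T ^ (d + 1) / ((d + 1)! * (d + 1))) ≤ T ^ (d + 1) / (d ! * d) := by
  have hd' : (0 : ℝ) < d := by exact_mod_cast hd
  calc 2 * (T ^ (d + 1) / ((d + 1)! * (d + 1)))
      = T ^ (d + 1) / (d ! * ((d + 1) ^ 2 / 2)) := by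
        push_cast [Nat.factorial_succ]; field_simp
    _ ≤ T ^ (d + 1) / (d ! * d) := by
        gcongr
        nlinarith

/-- When `μ` has moments up to order `n` this is `taylorWithinEval (charFun μ) n univ 0 t`
(`taylorWithinEval_charFun_zero`). -/
noncomputable def charFunTaylor (μ : Measure ℝ) (n : ℕ) (t : ℝ) : ℂ :=
  ∑ k ∈ Finset.range (n + 1), (t * I) ^ k / k ! * ((∫ x, x ^ k ∂μ : ℝ) : ℂ)

theorem norm_charFun_sub_charFunTaylor_le {μ : Measure ℝ} [IsProbabilityMeasure μ]
    (hμ : ∀ᵐ x ∂μ, |x| ≤ 1) (n : ℕ) (t : ℝ) :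
    ‖charFun μ t - charFunTaylor μ n t‖ ≤ |t| ^ (n + 1) / (n + 1)! * Real.exp |t| := by
  have hexp : Integrable (fun x : ℝ => exp (t * x * I)) μ :=
    .of_bound (by fun_prop) 1 (ae_of_all _ fun x => by rw [← ofReal_mul, norm_exp_ofReal_mul_I])
  have hterm (k : ℕ) : Integrable (fun x : ℝ => (t * x * I) ^ k / k !) μ := by
    have hpow : Integrable (fun x : ℝ => (x : ℂ) ^ k) μ :=
      .of_bound (by fun_prop) 1 (hμ.mono fun x hx => by
        simpa [norm_pow] using pow_le_one₀ (abs_nonneg x) hx)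
    exact (hpow.const_mul ((t * I) ^ k / k !)).congr (ae_of_all _ fun x => by ring)
  have hrepr : charFun μ t - charFunTaylor μ n t
      = ∫ x, (exp (t * x * I) - ∑ k ∈ Finset.range (n + 1), (t * x * I) ^ k / k !) ∂μ := by
    rw [charFun_apply_real, charFunTaylor,
      integral_sub hexp (integrable_finsetSum _ fun k _ => hterm k),
      integral_finsetSum _ fun k _ => hterm k]
    congr 1
    refine Finset.sum_congr rfl fun k _ => ?_
    rw [← integral_complex_ofReal, ← integral_const_mul]
    congr 1 with x
    push_cast
    ring
  have hbound : ∀ᵐ x : ℝ ∂μ,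
      ‖exp (t * x * I) - ∑ k ∈ Finset.range (n + 1), ((t * x * I) ^ k / k !)‖
        ≤ |t| ^ (n + 1) / (n + 1)! * Real.exp |t| := by
    filter_upwards [hμ] with x hx
    have hnorm : ‖(t * x * I : ℂ)‖ ≤ |t| := by
      simpa using mul_le_of_le_one_right (abs_nonneg t) hx
    refine (norm_exp_sub_sum_range_le _ _).trans ?_
    gcongr
  rw [hrepr]
  simpa using norm_integral_le_of_norm_le_const hbound

theorem norm_charFunTaylor_sub_le {μ ν : Measure ℝ} [IsProbabilityMeasure μ]
    [IsProbabilityMeasure ν] {n : ℕ} {γ : ℝ}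
    (h : ∀ m ∈ Finset.Icc 1 n, |(∫ x, x ^ m ∂μ) - ∫ x, x ^ m ∂ν| ≤ γ) (t : ℝ) :
    ‖charFunTaylor μ n t - charFunTaylor ν n t‖
      ≤ γ * ∑ i ∈ Finset.range n, |t| ^ (i + 1) / (i + 1)! := by
  unfold charFunTaylor
  rw [← Finset.sum_sub_distrib, Finset.sum_range_succ']
  simp only [← mul_sub, pow_zero, integral_const, probReal_univ, smul_eq_mul, sub_self, add_zero,
    Finset.mul_sum]
  refine (norm_sum_le _ _).trans (Finset.sum_le_sum fun i hi => ?_)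
  have hm := h (i + 1) (Finset.mem_Icc.2 ⟨by omega, Finset.mem_range.1 hi⟩)
  rw [← ofReal_sub, norm_mul, norm_real, Real.norm_eq_abs, mul_comm γ]
  gcongr
  simp [norm_pow]

theorem norm_charFun_sub_le_of_moments_close {μ ν : Measure ℝ} [IsProbabilityMeasure μ]
    [IsProbabilityMeasure ν] (hμ : ∀ᵐ x ∂μ, |x| ≤ 1) (hν : ∀ᵐ x ∂ν, |x| ≤ 1) {n : ℕ} {γ : ℝ}
    (h : ∀ m ∈ Finset.Icc 1 n, |(∫ x, x ^ m ∂μ) - ∫ x, x ^ m ∂ν| ≤ γ) (t : ℝ) :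
    ‖charFun μ t - charFun ν t‖
      ≤ γ * ∑ i ∈ Finset.range n, |t| ^ (i + 1) / (i + 1)!
        + 2 * (|t| ^ (n + 1) / (n + 1)! * Real.exp |t|) := by
  have hμ' := norm_charFun_sub_charFunTaylor_le hμ n t
  have hν' := norm_charFun_sub_charFunTaylor_le hν n t
  rw [norm_sub_rev] at hν'
  have hpoly := norm_charFunTaylor_sub_le h t
  calc ‖charFun μ t - charFun ν t‖
      ≤ ‖charFun μ t - charFunTaylor μ n t‖ + ‖charFunTaylor μ n t - charFunTaylor ν n t‖
        + ‖charFunTaylor ν n t - charFun ν t‖ :=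
        (norm_sub_le_norm_sub_add_norm_sub _ (charFunTaylor ν n t) _).trans
          (add_le_add_left (norm_sub_le_norm_sub_add_norm_sub _ _ _) _)
    _ ≤ _ := by linarith

theorem integral_norm_charFun_sub_div_le {μ ν : Measure ℝ} [IsProbabilityMeasure μ]
    [IsProbabilityMeasure ν] (hμ : ∀ᵐ x ∂μ, |x| ≤ 1) (hν : ∀ᵐ x ∂ν, |x| ≤ 1) {n : ℕ} {γ : ℝ}
    (h : ∀ m ∈ Finset.Icc 1 n, |(∫ x, x ^ m ∂μ) - ∫ x, x ^ m ∂ν| ≤ γ) {T : ℝ} (hT : 0 ≤ T) :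
    ∫ t in (0:ℝ)..T, ‖charFun μ t - charFun ν t‖ / t
      ≤ γ * ∑ i ∈ Finset.range n, T ^ (i + 1) / ((i + 1)! * (i + 1))
        + 2 * Real.exp T * (T ^ (n + 1) / ((n + 1)! * (n + 1))) := by
  set g : ℝ → ℝ := fun t =>
    γ * ∑ i ∈ Finset.range n, t ^ i / (i + 1)! + 2 * Real.exp T * (t ^ n / (n + 1)!) with hg_def
  have hg : IntervalIntegrable g volume 0 T := Continuous.intervalIntegrable (by fun_prop) _ _
  have hle : ∀ t ∈ Ioc 0 T, ‖charFun μ t - charFun ν t‖ / t ≤ g t := by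
    rintro t ⟨ht0, htT⟩
    have hgt : g t * t = γ * ∑ i ∈ Finset.range n, t ^ (i + 1) / (i + 1)!
        + 2 * Real.exp T * (t ^ (n + 1) / (n + 1)!) := by
      simp only [hg_def, add_mul, Finset.sum_mul, mul_assoc, div_mul_eq_mul_div, pow_succ]
    rw [div_le_iff₀ ht0, hgt]
    refine (norm_charFun_sub_le_of_moments_close hμ hν h t).trans ?_
    rw [abs_of_pos ht0]
    have : Real.exp t ≤ Real.exp T := Real.exp_le_exp.2 htT
    have : 0 ≤ t ^ (n + 1) / (n + 1)! := by positivity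
    nlinarith
  have hf : IntervalIntegrable (fun t => ‖charFun μ t - charFun ν t‖ / t) volume 0 T := by
    have hmeas : Measurable fun t => ‖charFun μ t - charFun ν t‖ / t :=
      (continuous_charFun.sub continuous_charFun).norm.measurable.div measurable_id
    refine hg.mono_fun' hmeas.aestronglyMeasurable ?_
    rw [uIoc_of_le hT]
    refine (ae_restrict_mem measurableSet_Ioc).mono fun t ht => ?_
    dsimp only
    rw [Real.norm_of_nonneg (div_nonneg (norm_nonneg _) ht.1.le)]
    exact hle t ht
  calc ∫ t in (0:ℝ)..T, ‖charFun μ t - charFun ν t‖ / t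
      ≤ ∫ t in (0:ℝ)..T, g t :=
        intervalIntegral.integral_mono_on_of_le_Ioo hT hf hg fun t ht =>
          hle t (Ioo_subset_Ioc_self ht)
    _ = _ := by
      rw [intervalIntegral.integral_add (Continuous.intervalIntegrable (by fun_prop) _ _)
          (Continuous.intervalIntegrable (by fun_prop) _ _),
        intervalIntegral.integral_const_mul, intervalIntegral.integral_const_mul,
        intervalIntegral.integral_finsetSum fun i _ =>
          Continuous.intervalIntegrable (by fun_prop) _ _]
      simp [integral_pow, div_div, mul_comm]

/-- If the first `d` moments of two probability measures on `[0,1]` are `γ`-close, then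
for any `T > 1` the integral `∫_0^T |ψ_q(t) − ψ_p(t)|/t dt` of the normalized difference
of characteristic functions is at most `e^T (γ + T^{d+1}/(d!·d))`. -/
theorem charFun_int_le_of_moments_close
    (p q : Measure ℝ) [IsProbabilityMeasure p] [IsProbabilityMeasure q]
    (hp : p (Set.Icc (0:ℝ) 1)ᶜ = 0) (hq : q (Set.Icc (0:ℝ) 1)ᶜ = 0)
    (d : ℕ) (hd : 1 ≤ d) (γ : ℝ)
    (hmom : ∀ m ∈ Finset.Icc 1 d, |(∫ x, x ^ m ∂p) - ∫ x, x ^ m ∂q| ≤ γ)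
    (T : ℝ) (hT : 1 < T) :
    (∫ t in (0:ℝ)..T,
        ‖(∫ x, Complex.exp (t * x * Complex.I) ∂q)
            - ∫ x, Complex.exp (t * x * Complex.I) ∂p‖ / t)
      ≤ Real.exp T * (γ + T ^ (d + 1) / (d.factorial * d)) := by
  have hγ : 0 ≤ γ := (abs_nonneg _).trans (hmom 1 (Finset.mem_Icc.2 ⟨le_rfl, hd⟩))
  have hT0 : 0 ≤ T := by linarith
  have abs_le_one (μ : Measure ℝ) (hμ : μ (Icc 0 1)ᶜ = 0) : ∀ᵐ x ∂μ, |x| ≤ 1 :=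
    (show ∀ᵐ x ∂μ, x ∈ Icc (0:ℝ) 1 from mem_ae_iff.2 hμ).mono fun x hx =>
      abs_le.2 ⟨by linarith [hx.1], hx.2⟩
  simp only [← charFun_apply_real]
  calc _ ≤ γ * ∑ i ∈ Finset.range d, T ^ (i + 1) / ((i + 1)! * (i + 1))
          + Real.exp T * (2 * (T ^ (d + 1) / ((d + 1)! * (d + 1)))) :=
        (integral_norm_charFun_sub_div_le (abs_le_one q hq) (abs_le_one p hp)
          (fun m hm => (abs_sub_comm _ _).trans_le (hmom m hm)) hT0).trans_eq (by ring)
    _ ≤ γ * (Real.exp T - 1) + Real.exp T * (T ^ (d + 1) / (d ! * d)) := by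
        gcongr
        · exact Real.sum_range_pow_succ_div_le_exp_sub_one hT0 d
        · exact two_mul_pow_succ_div_factorial_succ_le hT0 hd
    _ ≤ Real.exp T * (γ + T ^ (d + 1) / (d.factorial * d)) := by nlinarith
end

section
/- Let S₁ = (s¹_{ij}) and S₂ = (s²_{ij}) be two symmetric k×k matrices with entries in [0,1], and define H(S) = Σ_{i<j} h(s_{ij}) where h is binary entropy. Set α = ‖S₁ − S₂‖₁/(4k²) where ‖S₁−S₂‖₁ = Σ_{i<j}|s¹_{ij} − s²_{ij}|, and assume 0 < α < 1/2. Then H(S₂) − H(S₁) ≤ 5k² h(α). -/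
open Real Finset

/-! Subadditivity of the concave function `h` with `h 0 = 0` gives `h y - h x ≤ h |y - x|`
entrywise, and `h` lies below its tangent line at `α`, whose slope `log ((1 - α) / α)` is
nonnegative for `α ≤ 1/2`. Summing over the at most `k²` pairs gives
`H(S₂) - H(S₁) ≤ k² h(α) + ‖S₁ - S₂‖₁ log ((1 - α) / α)`, and `‖S₁ - S₂‖₁ = 4k²α` with
`α log ((1 - α) / α) = h(α) + log (1 - α) ≤ h(α)`. -/

theorem ConcaveOn.apply_add_le {f : ℝ → ℝ} {t : ℝ} (hf : ConcaveOn ℝ (Set.Icc 0 t) f)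
    (hf₀ : 0 ≤ f 0) {x y : ℝ} (hx : 0 ≤ x) (hy : 0 ≤ y) (hxy : x + y ≤ t) :
    f (x + y) ≤ f x + f y := by
  rcases (add_nonneg hx hy).eq_or_lt with hs | hs
  · obtain ⟨rfl, rfl⟩ : x = 0 ∧ y = 0 := ⟨by linarith, by linarith⟩
    simpa using hf₀
  -- `x` and `y` lie on the segment from `0` to `x + y`.
  have hseg : ∀ c, 0 ≤ c → c ≤ 1 → c * f (x + y) ≤ f (c * (x + y)) := fun c hc₀ hc₁ => by
    have := hf.2 ⟨le_rfl, hs.le.trans hxy⟩ ⟨hs.le, hxy⟩ (sub_nonneg.2 hc₁) hc₀ (by ring)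
    simp only [smul_eq_mul, mul_zero, zero_add] at this
    nlinarith [mul_nonneg (sub_nonneg.2 hc₁) hf₀]
  have hfx := hseg (x / (x + y)) (by positivity) (div_le_one_of_le₀ (by linarith) hs.le)
  have hfy := hseg (y / (x + y)) (by positivity) (div_le_one_of_le₀ (by linarith) hs.le)
  rw [div_mul_cancel₀ _ hs.ne'] at hfx hfy
  have : x / (x + y) * f (x + y) + y / (x + y) * f (x + y) = f (x + y) := by
    field_simp
  linarith

theorem binEntropy_add_le {x y : ℝ} (hx : 0 ≤ x) (hy : 0 ≤ y) (hxy : x + y ≤ 1) :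
    binEntropy (x + y) ≤ binEntropy x + binEntropy y :=
  strictConcave_binEntropy.concaveOn.apply_add_le (by simp) hx hy hxy

theorem binEntropy_sub_binEntropy_le_binEntropy_abs_sub {x y : ℝ}
    (hx : x ∈ Set.Icc (0 : ℝ) 1) (hy : y ∈ Set.Icc (0 : ℝ) 1) :
    binEntropy y - binEntropy x ≤ binEntropy |y - x| := by
  obtain ⟨hx₀, hx₁⟩ := hx
  obtain ⟨hy₀, hy₁⟩ := hy
  rcases le_total x y with h | h
  · have := binEntropy_add_le hx₀ (sub_nonneg.2 h) (by linarith)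
    rw [abs_of_nonneg (sub_nonneg.2 h)]
    rw [add_sub_cancel] at this
    linarith
  · have := binEntropy_add_le (sub_nonneg.2 hx₁) (sub_nonneg.2 h) (by linarith)
    rw [abs_sub_comm, abs_of_nonneg (sub_nonneg.2 h)]
    rw [sub_add_sub_cancel, binEntropy_one_sub, binEntropy_one_sub] at this
    linarith

theorem sub_le_mul_log_sub_mul_log {x a : ℝ} (hx : 0 ≤ x) (ha : 0 < a) :
    x - a ≤ x * log x - x * log a := by
  rcases hx.eq_or_lt with rfl | hx
  · simpa using ha.le
  have := mul_le_mul_of_nonneg_left (self_sub_one_le_mul_log (div_nonneg hx.le ha.le)) ha.le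
  rw [log_div hx.ne' ha.ne'] at this
  field_simp at this
  linarith

-- Gibbs' inequality; the right side is the tangent line of `binEntropy` at `a`.
theorem binEntropy_le_tangent {x a : ℝ} (hx₀ : 0 ≤ x) (hx₁ : x ≤ 1) (ha₀ : 0 < a)
    (ha₁ : a < 1) :
    binEntropy x ≤ binEntropy a + (x - a) * (log (1 - a) - log a) := by
  have h₁ := sub_le_mul_log_sub_mul_log hx₀ ha₀
  have h₂ := sub_le_mul_log_sub_mul_log (sub_nonneg.2 hx₁) (sub_pos.2 ha₁)
  simp only [binEntropy, log_inv]
  linarith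

theorem mul_log_sub_log_le_binEntropy {a : ℝ} (ha₀ : 0 < a) (ha₁ : a < 1) :
    a * (log (1 - a) - log a) ≤ binEntropy a := by
  have := log_nonpos (sub_nonneg.2 ha₁.le) (by linarith)
  simp only [binEntropy, log_inv]
  linarith

theorem binEntropy_sub_binEntropy_le {x y a : ℝ} (hx : x ∈ Set.Icc (0 : ℝ) 1)
    (hy : y ∈ Set.Icc (0 : ℝ) 1) (ha₀ : 0 < a) (ha₁ : a ≤ 1 / 2) :
    binEntropy y - binEntropy x ≤ binEntropy a + |y - x| * (log (1 - a) - log a) := by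
  have habs₁ : |y - x| ≤ 1 := abs_sub_le_of_nonneg_of_le hy.1 hy.2 hx.1 hx.2
  have hslope : 0 ≤ log (1 - a) - log a :=
    sub_nonneg.2 (log_le_log ha₀ (by linarith))
  calc binEntropy y - binEntropy x ≤ binEntropy |y - x| :=
        binEntropy_sub_binEntropy_le_binEntropy_abs_sub hx hy
    _ ≤ binEntropy a + (|y - x| - a) * (log (1 - a) - log a) :=
        binEntropy_le_tangent (abs_nonneg _) habs₁ ha₀ (by linarith)
    _ ≤ binEntropy a + |y - x| * (log (1 - a) - log a) := by nlinarith

theorem entropy_diff_le_of_L1_close_general (k : ℕ) (S₁ S₂ : Fin k → Fin k → ℝ)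
    (hmem₁ : ∀ i j, S₁ i j ∈ Set.Icc (0:ℝ) 1)
    (hmem₂ : ∀ i j, S₂ i j ∈ Set.Icc (0:ℝ) 1)
    (α : ℝ)
    (hαdef : α = (∑ p ∈ Finset.univ.filter (fun p : Fin k × Fin k => p.1 < p.2),
        |S₁ p.1 p.2 - S₂ p.1 p.2|) / (4 * k ^ 2))
    (hα₀ : 0 < α) (hα₁ : α < 1 / 2) :
    (∑ p ∈ Finset.univ.filter (fun p : Fin k × Fin k => p.1 < p.2),
        Real.binEntropy (S₂ p.1 p.2))
      - (∑ p ∈ Finset.univ.filter (fun p : Fin k × Fin k => p.1 < p.2),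
          Real.binEntropy (S₁ p.1 p.2))
      ≤ 5 * k ^ 2 * Real.binEntropy α := by
  set T := Finset.univ.filter (fun p : Fin k × Fin k => p.1 < p.2)
  set D := ∑ p ∈ T, |S₁ p.1 p.2 - S₂ p.1 p.2|
  set L := log (1 - α) - log α
  have hk : (4 * k ^ 2 : ℝ) ≠ 0 := by
    rintro hk
    rw [hk, div_zero] at hαdef
    exact hα₀.ne' hαdef
  have hD : D = 4 * k ^ 2 * α := by rw [hαdef, mul_div_cancel₀ _ hk]
  have hcard : (#T : ℝ) ≤ k ^ 2 := by
    exact_mod_cast (card_filter_le _ _).trans_eq (by simp [sq])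
  have hsum : ∑ p ∈ T, (binEntropy (S₂ p.1 p.2) - binEntropy (S₁ p.1 p.2))
      ≤ #T * binEntropy α + D * L := by
    calc _ ≤ ∑ p ∈ T, (binEntropy α + |S₁ p.1 p.2 - S₂ p.1 p.2| * L) :=
          sum_le_sum fun p _ => abs_sub_comm (S₁ _ _) _ ▸
            binEntropy_sub_binEntropy_le (hmem₁ _ _) (hmem₂ _ _) hα₀ hα₁.le
      _ = #T * binEntropy α + D * L := by
          rw [sum_add_distrib, sum_const, nsmul_eq_mul, sum_mul]
  have hαL := mul_log_sub_log_le_binEntropy hα₀ (by linarith)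
  have hh := binEntropy_nonneg hα₀.le (by linarith : α ≤ 1)
  rw [← sum_sub_distrib]
  calc _ ≤ #T * binEntropy α + D * L := hsum
    _ ≤ k ^ 2 * binEntropy α + 4 * k ^ 2 * binEntropy α := by
        rw [hD, mul_assoc]
        gcongr
    _ = 5 * k ^ 2 * binEntropy α := by ring

/-- Continuity of the entropy of a Szemerédi type: if `S₁, S₂` are symmetric `k × k`
matrices with entries in `[0,1]`, `‖S₁ − S₂‖₁` is the sum of entrywise distances over
pairs `i < j`, and `α = ‖S₁ − S₂‖₁/(4k²) ∈ (0, 1/2)`, then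
`H(S₂) − H(S₁) ≤ 5 k² h(α)`. -/
theorem entropy_diff_le_of_L1_close (k : ℕ) (S₁ S₂ : Fin k → Fin k → ℝ)
    (hsym₁ : ∀ i j, S₁ i j = S₁ j i) (hsym₂ : ∀ i j, S₂ i j = S₂ j i)
    (hmem₁ : ∀ i j, S₁ i j ∈ Set.Icc (0:ℝ) 1)
    (hmem₂ : ∀ i j, S₂ i j ∈ Set.Icc (0:ℝ) 1)
    (α : ℝ)
    (hαdef : α = (∑ p ∈ Finset.univ.filter (fun p : Fin k × Fin k => p.1 < p.2),
        |S₁ p.1 p.2 - S₂ p.1 p.2|) / (4 * k ^ 2))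
    (hα₀ : 0 < α) (hα₁ : α < 1 / 2) :
    (∑ p ∈ Finset.univ.filter (fun p : Fin k × Fin k => p.1 < p.2),
        Real.binEntropy (S₂ p.1 p.2))
      - (∑ p ∈ Finset.univ.filter (fun p : Fin k × Fin k => p.1 < p.2),
          Real.binEntropy (S₁ p.1 p.2))
      ≤ 5 * k ^ 2 * Real.binEntropy α :=
  entropy_diff_le_of_L1_close_general k S₁ S₂ hmem₁ hmem₂ α hαdef hα₀ hα₁
end

section
/- Let S be a symmetric k×k matrix with entries in [0,1] representing a random graph with independent edge probabilities s_{ij}, and let t(S, K_r) = (1/C(k,r)) Σ_{A⊆[k], |A|=r} Π_{i<j∈A} s_{ij} be the mean K_r-clique density. Then for any φ' ∈ [0,1] with φ' ≥ t(S,K_r) =: φ, there exists α ∈ [0,1] with α ≤ ((φ'−φ)/(1−φ))^{1/C(r,2)} such that the matrix S̄ = S + α(1−S) (entrywise, i.e. s̄_{ij} = s_{ij} + α(1−s_{ij})) satisfies t(S̄, K_r) = φ'. -/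
open Finset

/-- The mean `K_r`-clique density of a `k × k` edge-probability matrix `S`. -/
noncomputable def cliqueDensity (k r : ℕ) (S : Fin k → Fin k → ℝ) : ℝ :=
  ((k.choose r : ℝ))⁻¹ *
    ∑ A ∈ Finset.powersetCard r (Finset.univ : Finset (Fin k)),
      ∏ p ∈ (A ×ˢ A).filter (fun p : Fin k × Fin k => p.1 < p.2), S p.1 p.2

/-!
Moving every edge probability `s` to `s + α (1 - s)` raises the probability `∏ s_e` of each
`r`-clique by at least `α ^ C(r,2) (1 - ∏ s_e)`; averaging over the cliques,
`t(S̄, K_r) ≥ φ + α ^ C(r,2) (1 - φ)`. For `α = ((φ' - φ) / (1 - φ)) ^ (1 / C(r,2))` the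
right-hand side is `φ'`, while `α = 0` gives density `φ`, so the intermediate value theorem
yields the required `α` below that bound.
-/

open scoped BigOperators

lemma prod_add_mul_one_sub_le_prod {ι R : Type*}
    [CommRing R] [LinearOrder R] [IsStrictOrderedRing R] (E : Finset ι) (x : ι → R)
    (hx : ∀ e ∈ E, x e ∈ Set.Icc (0 : R) 1) {α : R} (hα : α ∈ Set.Icc (0 : R) 1) :
    ∏ e ∈ E, x e + α ^ #E * (1 - ∏ e ∈ E, x e) ≤
      ∏ e ∈ E, (x e + α * (1 - x e)) := by
  induction E using Finset.cons_induction with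
  | empty => simp
  | cons a E _ ih =>
    obtain ⟨hxa0, hxa1⟩ := hx a (mem_cons_self a E)
    have hxE : ∀ e ∈ E, x e ∈ Set.Icc (0 : R) 1 := fun e he => hx e (mem_cons_of_mem he)
    set P := ∏ e ∈ E, x e
    have hP0 : 0 ≤ P := prod_nonneg fun e he => (hxE e he).1
    have hP1 : P ≤ 1 := prod_le_one (fun e he => (hxE e he).1) fun e he => (hxE e he).2
    have hu0 : 0 ≤ α ^ #E := pow_nonneg hα.1 _
    have hu1 : α ^ #E ≤ 1 := pow_le_one₀ hα.1 hα.2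
    rw [prod_cons, prod_cons, card_cons, pow_succ]
    calc x a * P + α ^ #E * α * (1 - x a * P)
        ≤ (x a + α * (1 - x a)) * (P + α ^ #E * (1 - P)) := by
          -- the difference is `(1 - α) α^#E x_a (1 - P) + α (1 - α^#E) P (1 - x_a)`
          nlinarith [mul_nonneg (mul_nonneg (mul_nonneg (sub_nonneg.2 hα.2) hu0) hxa0)
              (sub_nonneg.2 hP1),
            mul_nonneg (mul_nonneg (mul_nonneg hα.1 (sub_nonneg.2 hu1)) hP0) (sub_nonneg.2 hxa1)]
      _ ≤ (x a + α * (1 - x a)) * ∏ e ∈ E, (x e + α * (1 - x e)) :=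
          mul_le_mul_of_nonneg_left (ih hxE) (by nlinarith [hα.1])

noncomputable def cliqueProb {k : ℕ} (S : Fin k → Fin k → ℝ) (A : Finset (Fin k)) : ℝ :=
  ∏ p ∈ {p ∈ A ×ˢ A | p.1 < p.2}, S p.1 p.2

lemma cliqueDensity_eq_expect (k r : ℕ) (S : Fin k → Fin k → ℝ) :
    cliqueDensity k r S = 𝔼 A ∈ powersetCard r (univ : Finset (Fin k)), cliqueProb S A := by
  rw [expect_eq_sum_div_card, card_powersetCard, card_univ, Fintype.card_fin, div_eq_inv_mul]
  rfl

lemma cliqueProb_add_pow_mul_le {k : ℕ} {S : Fin k → Fin k → ℝ}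
    (hS : ∀ i j, S i j ∈ Set.Icc (0 : ℝ) 1) (A : Finset (Fin k)) {α : ℝ}
    (hα : α ∈ Set.Icc (0 : ℝ) 1) :
    cliqueProb S A + α ^ (#A).choose 2 * (1 - cliqueProb S A) ≤
      cliqueProb (fun i j => S i j + α * (1 - S i j)) A := by
  rw [← card_product_filter_lt]
  exact prod_add_mul_one_sub_le_prod _ (fun p : Fin k × Fin k => S p.1 p.2)
    (fun p _ => hS p.1 p.2) hα

lemma cliqueDensity_add_pow_mul_le {k r : ℕ} (hk : r ≤ k) {S : Fin k → Fin k → ℝ}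
    (hS : ∀ i j, S i j ∈ Set.Icc (0 : ℝ) 1) {α : ℝ} (hα : α ∈ Set.Icc (0 : ℝ) 1) :
    cliqueDensity k r S + α ^ r.choose 2 * (1 - cliqueDensity k r S) ≤
      cliqueDensity k r (fun i j => S i j + α * (1 - S i j)) := by
  have hcliques : (powersetCard r (univ : Finset (Fin k))).Nonempty :=
    powersetCard_nonempty.2 (by simpa using hk)
  simp only [cliqueDensity_eq_expect]
  calc _ = 𝔼 A ∈ powersetCard r univ,
          (cliqueProb S A + α ^ r.choose 2 * (1 - cliqueProb S A)) := by
        rw [expect_add_distrib, ← mul_expect, expect_sub_distrib, expect_const hcliques]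
    _ ≤ _ := expect_le_expect fun A hA =>
        (mem_powersetCard.1 hA).2 ▸ cliqueProb_add_pow_mul_le hS A hα

lemma continuous_cliqueDensity_add_mul_one_sub (k r : ℕ) (S : Fin k → Fin k → ℝ) :
    Continuous fun α : ℝ => cliqueDensity k r (fun i j => S i j + α * (1 - S i j)) := by
  unfold cliqueDensity
  fun_prop

theorem exists_interpolation_to_density_general (k r : ℕ) (hr : 2 ≤ r) (hk : r ≤ k)
    (S : Fin k → Fin k → ℝ)
    (hmem : ∀ i j, S i j ∈ Set.Icc (0:ℝ) 1)
    (φ φ' : ℝ) (hφ : φ = cliqueDensity k r S)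
    (hφ' : φ' ∈ Set.Icc (0:ℝ) 1) (hle : φ ≤ φ') :
    ∃ α ∈ Set.Icc (0:ℝ) 1,
      α ≤ ((φ' - φ) / (1 - φ)) ^ ((1 : ℝ) / (r.choose 2)) ∧
      cliqueDensity k r (fun i j => S i j + α * (1 - S i j)) = φ' := by
  set x := (φ' - φ) / (1 - φ)
  have hx0 : 0 ≤ x := div_nonneg (sub_nonneg.2 hle) (sub_nonneg.2 (hle.trans hφ'.2))
  have hx1 : x ≤ 1 := div_le_one_of_le₀ (by linarith [hφ'.2]) (sub_nonneg.2 (hle.trans hφ'.2))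
  have hxφ : x * (1 - φ) = φ' - φ := by
    rcases (hle.trans hφ'.2).eq_or_lt with hφ1 | hφ1
    · simp [x, hφ1, le_antisymm hφ'.2 (hφ1 ▸ hle)]
    · exact div_mul_cancel₀ _ (sub_ne_zero.2 hφ1.ne')
  set β := x ^ ((1 : ℝ) / r.choose 2)
  have hβ : β ∈ Set.Icc (0 : ℝ) 1 :=
    ⟨Real.rpow_nonneg hx0 _, Real.rpow_le_one hx0 hx1 (by positivity)⟩
  have hβx : β ^ r.choose 2 = x := by
    simp only [β, one_div]
    exact Real.rpow_inv_natCast_pow hx0 (Nat.choose_pos hr).ne'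
  have hφ'β : φ' ≤ cliqueDensity k r (fun i j => S i j + β * (1 - S i j)) := by
    have := cliqueDensity_add_pow_mul_le hk hmem hβ
    rw [← hφ, hβx] at this
    linarith
  have hφ0 : cliqueDensity k r (fun i j => S i j + 0 * (1 - S i j)) = φ := by simp [hφ]
  obtain ⟨α, hα, hαφ'⟩ := intermediate_value_Icc hβ.1
    (continuous_cliqueDensity_add_mul_one_sub k r S).continuousOn ⟨hφ0 ▸ hle, hφ'β⟩
  exact ⟨α, ⟨hα.1, hα.2.trans hβ.2⟩, hα.2, hαφ'⟩

/-- Given a symmetric matrix `S` with entries in `[0,1]` and clique density `φ`, for any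
target density `φ' ∈ [0,1]` with `φ' ≥ φ`, there is `α ∈ [0,1]` with
`α ≤ ((φ'−φ)/(1−φ))^{1/C(r,2)}` such that the interpolated matrix
`S̄ = S + α(1−S)` has clique density exactly `φ'`. -/
theorem exists_interpolation_to_density (k r : ℕ) (hr : 2 ≤ r) (hk : r ≤ k)
    (S : Fin k → Fin k → ℝ)
    (hsym : ∀ i j, S i j = S j i)
    (hmem : ∀ i j, S i j ∈ Set.Icc (0:ℝ) 1)
    (φ φ' : ℝ) (hφ : φ = cliqueDensity k r S)
    (hφ' : φ' ∈ Set.Icc (0:ℝ) 1) (hle : φ ≤ φ') :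
    ∃ α ∈ Set.Icc (0:ℝ) 1,
      α ≤ ((φ' - φ) / (1 - φ)) ^ ((1 : ℝ) / (r.choose 2)) ∧
      cliqueDensity k r (fun i j => S i j + α * (1 - S i j)) = φ' :=
  exists_interpolation_to_density_general k r hr hk S hmem φ φ' hφ hφ' hle
end

section
/- For real numbers s₁,…,s_N ∈ [0,1] and α ∈ [0,1], Π_{ℓ=1}^N (s_ℓ + α(1−s_ℓ)) ≥ Π_{ℓ=1}^N s_ℓ + α^N (1 − Π_{ℓ=1}^N s_ℓ). -/
open Finset

/-!
Write `mix β x = x + β (1 - x)`. For `x, y, β, γ ∈ [0, 1]` one has the identity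
`mix β x * mix γ y - mix (β γ) (x y) = x (1 - y) γ (1 - β) + (1 - x) y β (1 - γ) ≥ 0`,
so `mix` is supermultiplicative in both arguments jointly; induction over the factors gives
`mix (∏ αᵢ) (∏ sᵢ) ≤ ∏ mix αᵢ sᵢ`, and all `αᵢ = α` is the theorem.
-/

def mix (β x : ℝ) : ℝ := x + β * (1 - x)

lemma mix_nonneg {β x : ℝ} (hβ : 0 ≤ β) (hx : x ∈ Set.Icc (0 : ℝ) 1) : 0 ≤ mix β x := by
  unfold mix
  nlinarith [hx.1, hx.2]

lemma mix_mul_le_mul_mix {β γ x y : ℝ} (hβ : β ∈ Set.Icc (0 : ℝ) 1) (hγ : γ ∈ Set.Icc (0 : ℝ) 1)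
    (hx : x ∈ Set.Icc (0 : ℝ) 1) (hy : y ∈ Set.Icc (0 : ℝ) 1) :
    mix (β * γ) (x * y) ≤ mix β x * mix γ y := by
  have gap : mix β x * mix γ y - mix (β * γ) (x * y)
      = x * (1 - y) * γ * (1 - β) + (1 - x) * y * β * (1 - γ) := by
    unfold mix; ring
  have gap_nonneg : 0 ≤ x * (1 - y) * γ * (1 - β) + (1 - x) * y * β * (1 - γ) :=
    add_nonneg
      (mul_nonneg (mul_nonneg (mul_nonneg hx.1 (sub_nonneg.2 hy.2)) hγ.1) (sub_nonneg.2 hβ.2))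
      (mul_nonneg (mul_nonneg (mul_nonneg (sub_nonneg.2 hx.2) hy.1) hβ.1) (sub_nonneg.2 hγ.2))
  linarith

lemma prod_mem_Icc_zero_one {ι : Type*} {t : Finset ι} {f : ι → ℝ}
    (hf : ∀ i ∈ t, f i ∈ Set.Icc (0 : ℝ) 1) : ∏ i ∈ t, f i ∈ Set.Icc (0 : ℝ) 1 :=
  ⟨prod_nonneg fun i hi => (hf i hi).1, prod_le_one (fun i hi => (hf i hi).1) fun i hi => (hf i hi).2⟩

lemma mix_prod_le_prod_mix {ι : Type*} (t : Finset ι) {α s : ι → ℝ}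
    (hα : ∀ i ∈ t, α i ∈ Set.Icc (0 : ℝ) 1) (hs : ∀ i ∈ t, s i ∈ Set.Icc (0 : ℝ) 1) :
    mix (∏ i ∈ t, α i) (∏ i ∈ t, s i) ≤ ∏ i ∈ t, mix (α i) (s i) := by
  induction t using Finset.cons_induction with
  | empty => simp [mix]
  | cons a t ha ih =>
    simp only [mem_cons, forall_eq_or_imp] at hα hs
    rw [prod_cons, prod_cons, prod_cons]
    calc mix (α a * ∏ i ∈ t, α i) (s a * ∏ i ∈ t, s i)
        ≤ mix (α a) (s a) * mix (∏ i ∈ t, α i) (∏ i ∈ t, s i) :=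
          mix_mul_le_mul_mix hα.1 (prod_mem_Icc_zero_one hα.2) hs.1 (prod_mem_Icc_zero_one hs.2)
      _ ≤ mix (α a) (s a) * ∏ i ∈ t, mix (α i) (s i) :=
          mul_le_mul_of_nonneg_left (ih hα.2 hs.2) (mix_nonneg hα.1.1 hs.1)

/-- Product-mixing inequality: for `s_ℓ ∈ [0,1]` and `α ∈ [0,1]`,
`Π (s_ℓ + α(1−s_ℓ)) ≥ Π s_ℓ + α^N (1 − Π s_ℓ)`. -/
theorem prod_mix_ge (N : ℕ) (s : Fin N → ℝ)
    (hs : ∀ ℓ, s ℓ ∈ Set.Icc (0:ℝ) 1) (α : ℝ) (hα : α ∈ Set.Icc (0:ℝ) 1) :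
    (∏ ℓ, s ℓ) + α ^ N * (1 - ∏ ℓ, s ℓ) ≤ ∏ ℓ, (s ℓ + α * (1 - s ℓ)) := by
  have h := mix_prod_le_prod_mix univ (α := fun _ => α) (fun _ _ => hα) fun ℓ _ => hs ℓ
  rwa [prod_const, card_univ, Fintype.card_fin] at h
end

section
/- Consider a random bipartite graph G = (V₁, V₂) with |V₁| = |V₂| = g, where each of the g² possible edges is present independently with probability s ∈ [0,1]. The probability that G is not ε-uniform (i.e., that there exist A ⊆ V₁, B ⊆ V₂ with |A|, |B| ≥ εg and |e(A,B)/(|A||B|) − s| > ε) is at most 2^{−2ε⁴g² + 2g + 2 log₂ g + 1}. -/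
/-!
For a fixed pair `(A, B)`, the number of edges between `A` and `B` is a sum of `|A||B|`
independent Bernoulli(`s`) variables, each `1/4`-sub-Gaussian after centring (Hoeffding's lemma).
Hoeffding's inequality bounds the probability that the density of `(A, B)` deviates from `s`
by more than `ε` by `2 exp(-2ε²|A||B|) ≤ 2 exp(-2ε⁴g²)`, and a union bound over the `4^g`
pairs finishes the proof, since `exp x ≤ 2^x` for `x ≤ 0`.
-/

open MeasureTheory ProbabilityTheory Finset
open scoped NNReal

section Bernoulli

variable {I : Type*} [Fintype I] {p : ℝ≥0} (hp : p ≤ 1)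

noncomputable abbrev bernoulliPi : Measure (I → Bool) :=
  Measure.pi fun _ => (PMF.bernoulli p hp).toMeasure

lemma integral_ite_bernoulli :
    ∫ b, (if b then (1:ℝ) else 0) ∂(PMF.bernoulli p hp).toMeasure = p := by
  simp [PMF.integral_eq_sum, PMF.bernoulli_apply]

lemma hasSubgaussianMGF_ite_sub (i : I) :
    HasSubgaussianMGF (fun ω : I → Bool => (if ω i then (1:ℝ) else 0) - p) (1 / 4)
      (bernoulliPi hp) := by
  have hint : Integrable (fun ω : I → Bool => if ω i then (1:ℝ) else 0) (bernoulliPi hp) :=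
    integrable_comp_eval (μ := fun _ => (PMF.bernoulli p hp).toMeasure) (i := i)
      (f := fun b : Bool => if b then (1:ℝ) else 0) Integrable.of_finite
  have hmean : ∫ ω, (if ω i then (1:ℝ) else 0) - p ∂bernoulliPi hp = 0 := by
    rw [integral_sub hint (integrable_const _),
      integral_comp_eval (μ := fun _ => (PMF.bernoulli p hp).toMeasure) (i := i)
        (f := fun b : Bool => if b then (1:ℝ) else 0) (by fun_prop),
      integral_ite_bernoulli, integral_const]
    simp
  convert hasSubgaussianMGF_of_mem_Icc_of_integral_eq_zero (a := -(p:ℝ)) (b := 1 - p)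
    (by fun_prop) (ae_of_all _ fun ω => by cases ω i <;> simp) hmean using 1
  ext; norm_num

/-- Hoeffding's inequality. -/
lemma measureReal_abs_sum_ite_sub_ge_le (J : Finset I) {t : ℝ} (ht : 0 ≤ t) :
    (bernoulliPi hp).real {ω | t ≤ |∑ i ∈ J, ((if ω i then (1:ℝ) else 0) - p)|}
      ≤ 2 * Real.exp (-2 * t ^ 2 / #J) := by
  have hindep : iIndepFun (fun i (ω : I → Bool) => (if ω i then (1:ℝ) else 0) - p)
      (bernoulliPi hp) :=
    iIndepFun_pi (X := fun _ (b : Bool) => (if b then (1:ℝ) else 0) - p) fun _ => by fun_prop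
  have hsum := HasSubgaussianMGF.sum_of_iIndepFun hindep (s := J)
    fun i _ => hasSubgaussianMGF_ite_sub hp i
  have hc : -t ^ 2 / (2 * ∑ i ∈ J, (1 / 4 : ℝ≥0) : ℝ) = -2 * t ^ 2 / #J := by
    simp only [sum_const, nsmul_eq_mul, NNReal.coe_mul, NNReal.coe_natCast, one_div,
      NNReal.coe_inv, NNReal.coe_ofNat]
    ring
  have hupper := hsum.measure_ge_le ht
  have hlower := hsum.neg.measure_ge_le ht
  rw [hc] at hupper hlower
  calc (bernoulliPi hp).real {ω | t ≤ |∑ i ∈ J, ((if ω i then (1:ℝ) else 0) - p)|}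
      ≤ (bernoulliPi hp).real ({ω | t ≤ ∑ i ∈ J, ((if ω i then (1:ℝ) else 0) - p)} ∪
          {ω | t ≤ -∑ i ∈ J, ((if ω i then (1:ℝ) else 0) - p)}) := by
        refine measureReal_mono fun ω hω => ?_
        rcases le_abs'.1 (Set.mem_ofPred_eq ▸ hω) with h | h
        · exact Or.inr (by simp only [Set.mem_ofPred_eq]; linarith)
        · exact Or.inl h
    _ ≤ _ := (measureReal_union_le _ _).trans (by simp only [Pi.neg_apply] at hlower; linarith)

end Bernoulli

lemma measureReal_density_sub_gt_le {α β : Type*} [Fintype α] [Fintype β]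
    {p : ℝ≥0} (hp : p ≤ 1) (A : Finset α) (B : Finset β) {ε : ℝ} (hε : 0 ≤ ε) :
    (bernoulliPi hp).real {ω : α × β → Bool |
        ε < |(∑ a ∈ A, ∑ b ∈ B, if ω (a, b) then (1:ℝ) else 0) / (#A * #B) - p|}
      ≤ 2 * Real.exp (-2 * ε ^ 2 * (#A * #B)) := by
  set n : ℝ := #A * #B
  have hn0 : 0 ≤ n := by positivity
  have hn : (#(A ×ˢ B) : ℝ) = n := by simp [n]
  have hsum : ∀ ω : α × β → Bool,
      ∑ i ∈ A ×ˢ B, ((if ω i then (1:ℝ) else 0) - p)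
        = (∑ a ∈ A, ∑ b ∈ B, if ω (a, b) then (1:ℝ) else 0) - p * n := by
    intro ω
    rw [sum_sub_distrib, sum_product, sum_const, nsmul_eq_mul, hn, mul_comm]
  have hexp : -2 * (ε * n) ^ 2 / n = -2 * ε ^ 2 * n := by
    rcases eq_or_ne n 0 with h0 | h0
    · simp [h0]
    · field_simp
  have hoeffding := measureReal_abs_sum_ite_sub_ge_le hp (A ×ˢ B)
    (mul_nonneg hε hn0)
  rw [hn, hexp] at hoeffding
  refine le_trans (measureReal_mono fun ω hω => ?_) hoeffding
  simp only [Set.mem_ofPred_eq, hsum] at hω ⊢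
  rcases hn0.eq_or_lt with h0 | hpos
  · rw [← h0, mul_zero]
    exact abs_nonneg _
  · have hscale : (∑ a ∈ A, ∑ b ∈ B, if ω (a, b) then (1:ℝ) else 0) - p * n
        = ((∑ a ∈ A, ∑ b ∈ B, if ω (a, b) then (1:ℝ) else 0) / n - p) * n := by
      field_simp
    rw [hscale, abs_mul, abs_of_pos hpos]
    exact mul_le_mul_of_nonneg_right hω.le hpos.le

lemma measureReal_density_sub_gt_le_of_le_card {α β : Type*} [Fintype α] [Fintype β]
    {p : ℝ≥0} (hp : p ≤ 1) {A : Finset α} {B : Finset β} {ε m : ℝ} (hε : 0 ≤ ε) (hm : 0 ≤ m)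
    (hA : ε * m ≤ #A) (hB : ε * m ≤ #B) :
    (bernoulliPi hp).real {ω : α × β → Bool |
        ε < |(∑ a ∈ A, ∑ b ∈ B, if ω (a, b) then (1:ℝ) else 0) / (#A * #B) - p|}
      ≤ 2 * Real.exp (-2 * ε ^ 4 * m ^ 2) := by
  refine (measureReal_density_sub_gt_le hp A B hε).trans ?_
  have hcard : (ε * m) ^ 2 ≤ #A * #B := by
    nlinarith [mul_le_mul hA hB (mul_nonneg hε hm) (by positivity)]
  gcongr 2 * Real.exp ?_
  nlinarith [sq_nonneg ε]

lemma two_pow_mul_two_pow_mul_exp_le (g : ℕ) {c : ℝ} (hc : c ≤ 0) :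
    (2 ^ g * 2 ^ g : ℝ) * (2 * Real.exp c) ≤ 2 ^ (c + 2 * g + 2 * Real.logb 2 g + 1) := by
  have hexp : Real.exp c ≤ 2 ^ c := by
    rw [Real.rpow_def_of_pos two_pos]
    exact Real.exp_le_exp.2 (by nlinarith [Real.log_two_lt_d9, Real.log_pos one_lt_two])
  have h2g : (2 : ℝ) ^ (2 * (g : ℝ)) = 2 ^ g * 2 ^ g := by
    rw [← pow_add, ← Real.rpow_natCast]; push_cast; ring_nf
  have hlog : (1 : ℝ) ≤ 2 ^ (2 * Real.logb 2 g) := Real.one_le_rpow one_le_two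
    (mul_nonneg zero_le_two (div_nonneg (Real.log_natCast_nonneg g) (Real.log_nonneg one_le_two)))
  rw [Real.rpow_add two_pos, Real.rpow_add two_pos, Real.rpow_add two_pos, Real.rpow_one, h2g]
  have : (0:ℝ) ≤ 2 ^ c * (2 ^ g * 2 ^ g) := by positivity
  nlinarith

/-- A random bipartite graph on parts of size `g`, with each of the `g²` edges present
independently with probability `s`, fails to be `ε`-uniform with probability at most
`2^{−2ε⁴g² + 2g + 2 log₂ g + 1}`. -/
theorem prob_not_eps_uniform_le (g : ℕ) (s : ℝ) (hs : s ∈ Set.Icc (0:ℝ) 1)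
    (ε : ℝ) (hε : 0 < ε) :
    (Measure.pi (fun _ : Fin g × Fin g =>
        (PMF.bernoulli (Real.toNNReal s)
          (by simpa using Real.toNNReal_le_one.2 hs.2)).toMeasure))
      {ω : (Fin g × Fin g) → Bool |
        ∃ A B : Finset (Fin g),
          ε * g ≤ A.card ∧ ε * g ≤ B.card ∧
          ε < |(∑ a ∈ A, ∑ b ∈ B, if ω (a, b) then (1:ℝ) else 0)
                / (A.card * B.card) - s|}
      ≤ ENNReal.ofReal
          ((2:ℝ) ^ (-2 * ε ^ 4 * g ^ 2 + 2 * g + 2 * Real.logb 2 g + 1)) := by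
  have hp : Real.toNNReal s ≤ 1 := by simpa using Real.toNNReal_le_one.2 hs.2
  have hs' : (Real.toNNReal s : ℝ) = s := Real.coe_toNNReal s hs.1
  set bad : Finset (Fin g) × Finset (Fin g) → Set (Fin g × Fin g → Bool) := fun q =>
    {ω | ε * g ≤ #q.1 ∧ ε * g ≤ #q.2 ∧
      ε < |(∑ a ∈ q.1, ∑ b ∈ q.2, if ω (a, b) then (1:ℝ) else 0) / (#q.1 * #q.2) - s|}
  have hbad : ∀ q, (bernoulliPi hp).real (bad q) ≤ 2 * Real.exp (-2 * ε ^ 4 * g ^ 2) := by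
    rintro ⟨A, B⟩
    by_cases hAB : ε * g ≤ #A ∧ ε * g ≤ #B
    · refine le_trans (measureReal_mono fun ω hω => ?_)
        (measureReal_density_sub_gt_le_of_le_card hp hε.le g.cast_nonneg hAB.1 hAB.2)
      simpa [hs'] using hω.2.2
    · have hempty : bad (A, B) = ∅ :=
        Set.eq_empty_of_forall_notMem fun ω hω => hAB ⟨hω.1, hω.2.1⟩
      rw [hempty, measureReal_empty]
      positivity
  rw [← ofReal_measureReal]
  refine ENNReal.ofReal_le_ofReal ?_
  calc (bernoulliPi hp).real _ = (bernoulliPi hp).real (⋃ q, bad q) := by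
        congr 1; ext ω; simp [bad]
    _ ≤ ∑ q, (bernoulliPi hp).real (bad q) := measureReal_iUnion_fintype_le _
    _ ≤ ∑ _q : Finset (Fin g) × Finset (Fin g), 2 * Real.exp (-2 * ε ^ 4 * g ^ 2) :=
        sum_le_sum fun q _ => hbad q
    _ = (2 ^ g * 2 ^ g : ℝ) * (2 * Real.exp (-2 * ε ^ 4 * g ^ 2)) := by simp
    _ ≤ _ := two_pow_mul_two_pow_mul_exp_le g (by nlinarith [pow_pos hε 4])
end

section
/- Let W, U be finite disjoint vertex sets in a graph on n vertices, and suppose the pair (W,U) is not ε-uniform, as witnessed by W₁ ⊆ W, U₁ ⊆ U with |W₁| ≥ ε|W|, |U₁| ≥ ε|U| and |d(W₁,U₁) − d(W,U)| ≥ ε. Then q({W₁, W∖W₁}, {U₁, U∖U₁}) > q(W,U) + ε⁴ |W||U|/n². -/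
open Finset
open scoped Classical

/-- Edge density between two finite vertex sets of a graph. -/
noncomputable def edgeDens {V : Type*} (G : SimpleGraph V) (A B : Finset V) : ℝ :=
  (∑ a ∈ A, ∑ b ∈ B, if G.Adj a b then (1:ℝ) else 0) / (A.card * B.card)

/-- The energy `q(X,Y) = (|X||Y|/n²) d(X,Y)²` of a pair of vertex sets in a graph on
`n` vertices. -/
noncomputable def pairEnergy {V : Type*} (G : SimpleGraph V) (n : ℕ)
    (X Y : Finset V) : ℝ :=
  ((X.card : ℝ) * Y.card / (n : ℝ) ^ 2) * (edgeDens G X Y) ^ 2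

/-! The energy gained by the refinement is, up to the factor `1 / n²`, the weighted variance
`∑ mᵢ (dᵢ - d)²` of the densities `dᵢ` of the four cells, weighted by `mᵢ = |Xᵢ||Yᵢ|`, around
their weighted mean `d = d(W, U)`. The cell `W₁ × U₁` alone contributes
`m₁ (d₁ - d)² ≥ ε²|W||U| · ε²`; the inequality is strict because the deviations `mᵢ (dᵢ - d)`
sum to zero, so some other cell of positive weight deviates from `d` as well. -/

namespace Finset

variable {ι : Type*} {s : Finset ι} {w f c : ι → ℝ} {d : ℝ} {i : ι}

theorem sum_mul_sq_eq_add_sum_mul_sub_sq (hd : ∑ j ∈ s, w j * f j = (∑ j ∈ s, w j) * d) :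
    ∑ j ∈ s, w j * f j ^ 2 = (∑ j ∈ s, w j) * d ^ 2 + ∑ j ∈ s, w j * (f j - d) ^ 2 := by
  have hexpand : ∑ j ∈ s, w j * (f j - d) ^ 2
      = ∑ j ∈ s, w j * f j ^ 2 - 2 * d * ∑ j ∈ s, w j * f j + (∑ j ∈ s, w j) * d ^ 2 := by
    simp only [mul_sum, sum_mul, ← sum_sub_distrib, ← sum_add_distrib]
    exact sum_congr rfl fun j _ => by ring
  rw [hexpand, hd]
  ring

theorem mul_sq_lt_sum_mul_sq_of_sum_mul_eq_zero (hi : i ∈ s) (hw : ∀ j ∈ s, 0 ≤ w j)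
    (hsum : ∑ j ∈ s, w j * c j = 0) (hne : w i * c i ≠ 0) :
    w i * c i ^ 2 < ∑ j ∈ s, w j * c j ^ 2 := by
  obtain ⟨j, hj, hwc⟩ : ∃ j ∈ s.erase i, w j * c j ≠ 0 := by
    by_contra! h
    rw [← add_sum_erase s _ hi, sum_eq_zero h, add_zero] at hsum
    exact hne hsum
  have hwj : 0 < w j := (hw j (mem_of_mem_erase hj)).lt_of_ne' (left_ne_zero_of_mul hwc)
  have hcj : c j ≠ 0 := right_ne_zero_of_mul hwc
  rw [← add_sum_erase s _ hi, lt_add_iff_pos_right]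
  calc 0 < w j * c j ^ 2 := by positivity
    _ ≤ ∑ k ∈ s.erase i, w k * c k ^ 2 :=
      single_le_sum (fun k hk => mul_nonneg (hw k (mem_of_mem_erase hk)) (sq_nonneg _)) hj

theorem add_mul_sq_lt_sum_mul_sq (hi : i ∈ s) (hw : ∀ j ∈ s, 0 ≤ w j)
    (hd : ∑ j ∈ s, w j * f j = (∑ j ∈ s, w j) * d) (hwi : w i ≠ 0) (hfi : f i ≠ d) :
    (∑ j ∈ s, w j) * d ^ 2 + w i * (f i - d) ^ 2 < ∑ j ∈ s, w j * f j ^ 2 := by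
  rw [sum_mul_sq_eq_add_sum_mul_sub_sq hd, add_lt_add_iff_left]
  refine mul_sq_lt_sum_mul_sq_of_sum_mul_eq_zero (c := fun j => f j - d) hi hw ?_
    (mul_ne_zero hwi (sub_ne_zero.2 hfi))
  simp only [mul_sub, sum_sub_distrib, ← sum_mul, hd, sub_self]

end Finset

section Graph

variable {V : Type*} (G : SimpleGraph V)

noncomputable def edgeCount (A B : Finset V) : ℝ :=
  ∑ a ∈ A, ∑ b ∈ B, if G.Adj a b then (1:ℝ) else 0

theorem card_mul_card_mul_edgeDens (A B : Finset V) :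
    (A.card : ℝ) * B.card * edgeDens G A B = edgeCount G A B := by
  rcases A.eq_empty_or_nonempty with rfl | hA
  · simp [edgeCount]
  rcases B.eq_empty_or_nonempty with rfl | hB
  · simp [edgeCount]
  exact mul_div_cancel₀ _ (by positivity)

theorem edgeDens_eq_zero_of_card_mul_card_eq_zero {A B : Finset V}
    (h : (A.card : ℝ) * B.card = 0) : edgeDens G A B = 0 := by
  simp [edgeDens, h]

variable [DecidableEq V]

theorem edgeCount_sdiff_left {A₁ A : Finset V} (h : A₁ ⊆ A) (B : Finset V) :
    edgeCount G A B = edgeCount G A₁ B + edgeCount G (A \ A₁) B := by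
  rw [edgeCount, ← sum_sdiff h, add_comm]
  rfl

theorem edgeCount_sdiff_right (A : Finset V) {B₁ B : Finset V} (h : B₁ ⊆ B) :
    edgeCount G A B = edgeCount G A B₁ + edgeCount G A (B \ B₁) := by
  simp only [edgeCount, ← sum_add_distrib, ← sum_sdiff h, add_comm]

theorem card_mul_card_mul_edgeDens_split {A₁ A B₁ B : Finset V} (hA : A₁ ⊆ A) (hB : B₁ ⊆ B) :
    (A.card : ℝ) * B.card * edgeDens G A B
      = A₁.card * B₁.card * edgeDens G A₁ B₁ + A₁.card * (B \ B₁).card * edgeDens G A₁ (B \ B₁)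
        + (A \ A₁).card * B₁.card * edgeDens G (A \ A₁) B₁
        + (A \ A₁).card * (B \ B₁).card * edgeDens G (A \ A₁) (B \ B₁) := by
  simp only [card_mul_card_mul_edgeDens]
  rw [edgeCount_sdiff_left G hA, edgeCount_sdiff_right G _ hB, edgeCount_sdiff_right G _ hB]
  ring

theorem pairEnergy_add_lt_of_edgeDens_ne (n : ℕ) (hn : n ≠ 0) {A₁ A B₁ B : Finset V}
    (hA : A₁ ⊆ A) (hB : B₁ ⊆ B) (hAB₁ : (A₁.card : ℝ) * B₁.card ≠ 0)
    (hne : edgeDens G A₁ B₁ ≠ edgeDens G A B) :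
    pairEnergy G n A B + A₁.card * B₁.card * (edgeDens G A₁ B₁ - edgeDens G A B) ^ 2 / n ^ 2
      < pairEnergy G n A₁ B₁ + pairEnergy G n A₁ (B \ B₁)
        + pairEnergy G n (A \ A₁) B₁ + pairEnergy G n (A \ A₁) (B \ B₁) := by
  have hAB : (A.card : ℝ) * B.card = A₁.card * B₁.card + A₁.card * (B \ B₁).card
      + (A \ A₁).card * B₁.card + (A \ A₁).card * (B \ B₁).card := by
    rw [cast_card_sdiff hA, cast_card_sdiff hB]; ring
  have hgap := Finset.add_mul_sq_lt_sum_mul_sq (s := univ) (i := 0) (mem_univ _)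
    (w := ![(A₁.card : ℝ) * B₁.card, (A₁.card : ℝ) * (B \ B₁).card,
      ((A \ A₁).card : ℝ) * B₁.card, ((A \ A₁).card : ℝ) * (B \ B₁).card])
    (f := ![edgeDens G A₁ B₁, edgeDens G A₁ (B \ B₁), edgeDens G (A \ A₁) B₁,
      edgeDens G (A \ A₁) (B \ B₁)]) (d := edgeDens G A B)
    (fun j _ => by fin_cases j <;> dsimp <;> positivity)
    (by
      simp only [Fin.sum_univ_four, Matrix.cons_val]
      linear_combination edgeDens G A B * hAB - card_mul_card_mul_edgeDens_split G hA hB)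
    hAB₁ hne
  simp only [Fin.sum_univ_four, Matrix.cons_val, ← hAB] at hgap
  simp only [pairEnergy, div_mul_eq_mul_div, ← add_div]
  gcongr

end Graph

theorem energy_boost_general {V : Type*} [DecidableEq V] (G : SimpleGraph V) (n : ℕ)
    (hn : 0 < n) (ε : ℝ) (hε : 0 < ε)
    (W U : Finset V)
    (W₁ U₁ : Finset V) (hW₁ : W₁ ⊆ W) (hU₁ : U₁ ⊆ U)
    (hW₁card : ε * W.card ≤ W₁.card) (hU₁card : ε * U.card ≤ U₁.card)
    (hwit : ε ≤ |edgeDens G W₁ U₁ - edgeDens G W U|) :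
    pairEnergy G n W U + ε ^ 4 * ((W.card : ℝ) * U.card / (n : ℝ) ^ 2)
      < pairEnergy G n W₁ U₁ + pairEnergy G n W₁ (U \ U₁)
        + pairEnergy G n (W \ W₁) U₁ + pairEnergy G n (W \ W₁) (U \ U₁) := by
  have hne : edgeDens G W₁ U₁ ≠ edgeDens G W U := fun h => by
    rw [h, sub_self, abs_zero] at hwit; linarith
  have hdens : ε ^ 2 ≤ (edgeDens G W₁ U₁ - edgeDens G W U) ^ 2 := by
    simpa only [sq_abs] using pow_le_pow_left₀ hε.le hwit 2
  have hcard : ε ^ 2 * (W.card * U.card) ≤ (W₁.card : ℝ) * U₁.card := by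
    rw [sq, mul_mul_mul_comm]
    exact mul_le_mul hW₁card hU₁card (by positivity) (by positivity)
  have hW₁U₁ : (W₁.card : ℝ) * U₁.card ≠ 0 := fun h => by
    have hWU : (W.card : ℝ) * U.card = 0 :=
      le_antisymm (by nlinarith [pow_pos hε 2]) (by positivity)
    exact hne (by rw [edgeDens_eq_zero_of_card_mul_card_eq_zero G h,
      edgeDens_eq_zero_of_card_mul_card_eq_zero G hWU])
  have hboost : ε ^ 4 * (W.card * U.card)
      ≤ W₁.card * U₁.card * (edgeDens G W₁ U₁ - edgeDens G W U) ^ 2 :=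
    calc ε ^ 4 * (W.card * U.card) = ε ^ 2 * (W.card * U.card) * ε ^ 2 := by ring
      _ ≤ _ := mul_le_mul hcard hdens (by positivity) (by positivity)
  refine lt_of_le_of_lt ?_ (pairEnergy_add_lt_of_edgeDens_ne G n hn.ne' hW₁ hU₁ hW₁U₁ hne)
  rw [← mul_div_assoc]
  gcongr

/-- Energy boost from an irregularity witness: if `W₁ ⊆ W`, `U₁ ⊆ U` witness that
`(W,U)` is not `ε`-uniform, then refining by these sets increases the energy by more
than `ε⁴|W||U|/n²`. -/
theorem energy_boost {V : Type*} [DecidableEq V] (G : SimpleGraph V) (n : ℕ)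
    (hn : 0 < n) (ε : ℝ) (hε : 0 < ε)
    (W U : Finset V) (hWU : Disjoint W U)
    (W₁ U₁ : Finset V) (hW₁ : W₁ ⊆ W) (hU₁ : U₁ ⊆ U)
    (hW₁card : ε * W.card ≤ W₁.card) (hU₁card : ε * U.card ≤ U₁.card)
    (hwit : ε ≤ |edgeDens G W₁ U₁ - edgeDens G W U|) :
    pairEnergy G n W U + ε ^ 4 * ((W.card : ℝ) * U.card / (n : ℝ) ^ 2)
      < pairEnergy G n W₁ U₁ + pairEnergy G n W₁ (U \ U₁)
        + pairEnergy G n (W \ W₁) U₁ + pairEnergy G n (W \ W₁) (U \ U₁) :=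
  energy_boost_general G n hn ε hε W U W₁ U₁ hW₁ hU₁ hW₁card hU₁card hwit
end
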